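/- arXiv:2406.03970 — 2 statements merged into one kernel-verified Lean document; each statement's English description precedes it below -/
import Mathlib

section
/- Let p, q be fixed points of X_N with index functions a, b. Then the function c : i ↦ max(a_i, b_i) is the index function of a fixed point r of X_N, which satisfies I_r = I_p ∪ I_q (where I_p = {i : a_i = N}), and cl(C_p) ∩ cl(C_q) = cl(C_r). -/
open LinearAlgebra.Projectivization Projectivization Filter Topology

noncomputable section

/-- Topology on the projectivization: quotient topology. -/
instance {K V : Type*} [DivisionRing K] [AddCommGroup V] [Module K V] [TopologicalSpace V] :
    TopologicalSpace (ℙ K V) :=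
  inferInstanceAs (TopologicalSpace (Quotient (projectivizationSetoid K V)))

/-- The single nilpotent Jordan block `J_N` on `ℂ^N`: `J e_k = e_{k+1}` (`J e_N = 0`).
Indices are 0-based here (1-based in the paper). -/
def JN (N : ℕ) : (Fin N → ℂ) →ₗ[ℂ] (Fin N → ℂ) where
  toFun u k :=
    if h : 0 < k.val then u ⟨k.val - 1, lt_of_le_of_lt (Nat.sub_le _ _) k.isLt⟩ else 0
  map_add' u v := by funext k; by_cases h : 0 < k.val <;> simp [h]
  map_smul' a u := by funext k; by_cases h : 0 < k.val <;> simp [h]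

/-- The quiver Grassmannian `X_N ⊆ ℙ(ℂ^N)^{ℤ/nℤ}`. -/
def QGN (n N : ℕ) : Set (ZMod n → ℙ ℂ (Fin N → ℂ)) :=
  {L | ∀ i : ZMod n, (L i).submodule.map (JN N) ≤ (L (i + 1)).submodule}

end
/-- The standard basis vector `e_k` of `ℂ^N`. -/
def eN {N : ℕ} (k : Fin N) : Fin N → ℂ := Pi.single k 1

lemma eN_ne_zero {N : ℕ} (k : Fin N) : eN k ≠ 0 := by
  intro h
  have := congrFun h k
  simp [eN] at this

/-- `p` is a fixed point of `X_N` with index function `a`. -/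
def IsFixedPtN (n N : ℕ) (p : ZMod n → ℙ ℂ (Fin N → ℂ)) (a : ZMod n → Fin N) : Prop :=
  p ∈ QGN n N ∧ ∀ i, p i = Projectivization.mk ℂ (eN (a i)) (eN_ne_zero (a i))
/-- The cell `C_k ⊆ ℙ(ℂ^N)`. -/
def CbN {N : ℕ} (k : Fin N) : Set (ℙ ℂ (Fin N → ℂ)) :=
  {x | ∃ (u : Fin N → ℂ) (hu : u ≠ 0),
    x = Projectivization.mk ℂ u hu ∧ u k ≠ 0 ∧ ∀ c < k, u c = 0}

/-- The BB-cell of the fixed point of `X_N` with index function `a`. -/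
def cellN (n N : ℕ) (a : ZMod n → Fin N) : Set (ZMod n → ℙ ℂ (Fin N → ℂ)) :=
  QGN n N ∩ {L | ∀ i, L i ∈ CbN (a i)}

/-!
For a fixed-point index function `a`, the closure of the cell `C_a` is the set of `L ∈ X_N` with
`L_i ⊆ span {e_k | k ≥ a_i}` for all `i`. These conditions for `max a b` are the conjunction of
those for `a` and for `b`, which gives the intersection formula.

That set is closed: the quotient map from nonzero vectors to lines is open, and on
representatives the conditions are polynomial. Conversely, let `L` be in it, with representatives
`r_i`. `J r_j = 0` wherever `a_j = N - 1`, which `a` reaches within `N` steps from anywhere, so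
rescaling along the chains of `J` gives representatives `u_i` with `u_{i+1} = J u_i` whenever
`J u_i ≠ 0`. Define `W ε i 0 = u_i(N-1)` and `W ε i (t+1) = ε^[J u_i = 0] • W ε (i+1) t`. Taking
`W ε i (N-1-k)` as the `k`-th coordinate for `k ≥ a_i`, and `0` below, gives a curve of
`J`-compatible tuples, through `u` at `ε = 0` and inside `C_a` for `ε ≠ 0`.
-/

namespace Projectivization

variable {K V : Type*} [DivisionRing K] [AddCommGroup V] [Module K V]

theorem map_submodule_mk_le_iff (f : V →ₗ[K] V) {v w : V} (hv : v ≠ 0) (hw : w ≠ 0) :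
    (mk K v hv).submodule.map f ≤ (mk K w hw).submodule ↔ ∃ c : K, f v = c • w := by
  simp only [submodule_mk, Submodule.map_span, Set.image_singleton,
    Submodule.span_singleton_le_iff_mem, Submodule.mem_span_singleton, eq_comm]

variable [TopologicalSpace V]

theorem continuous_mk_subtype : Continuous fun v : {v : V // v ≠ 0} => mk K v.1 v.2 :=
  continuous_quot_mk

variable [ContinuousConstSMul K V]

theorem isOpenQuotientMap_mk_subtype :
    IsOpenQuotientMap fun v : {v : V // v ≠ 0} => mk K v.1 v.2 := by
  refine ⟨fun x => ⟨⟨x.rep, x.rep_nonzero⟩, x.mk_rep⟩, continuous_mk_subtype, fun U hU => ?_⟩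
  let scale (γ : Kˣ) (v : {v : V // v ≠ 0}) : {v : V // v ≠ 0} :=
    ⟨γ • v.1, (smul_ne_zero_iff_ne γ).2 v.2⟩
  have hscale (γ : Kˣ) : Continuous (scale γ) :=
    ((continuous_const_smul (γ : K)).comp continuous_subtype_val).subtype_mk _
  have hsat : (fun v : {v : V // v ≠ 0} => mk K v.1 v.2) ⁻¹'
      ((fun v : {v : V // v ≠ 0} => mk K v.1 v.2) '' U) = ⋃ γ : Kˣ, scale γ ⁻¹' U := by
    ext w
    simp only [Set.mem_preimage, Set.mem_image, Set.mem_iUnion]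
    constructor
    · rintro ⟨v, hv, hvw⟩
      obtain ⟨γ, hγ⟩ := (mk_eq_mk_iff K _ _ v.2 w.2).1 hvw
      exact ⟨γ, by convert hv using 1; exact Subtype.ext hγ⟩
    · rintro ⟨γ, hγ⟩
      exact ⟨scale γ w, hγ, (mk_eq_mk_iff K _ _ _ _).2 ⟨γ, rfl⟩⟩
  exact isOpen_coinduced.2 (hsat ▸ isOpen_iUnion fun γ => hU.preimage (hscale γ))

end Projectivization

theorem exists_smul_eq_iff_mul_eq_mul {ι K : Type*} [Field K] {x y : ι → K} (hy : y ≠ 0) :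
    (∃ c : K, x = c • y) ↔ ∀ k m, x k * y m = x m * y k := by
  constructor
  · rintro ⟨c, rfl⟩ k m
    simp only [Pi.smul_apply, smul_eq_mul]
    ring
  · intro h
    obtain ⟨m, hm⟩ : ∃ m, y m ≠ 0 := by
      by_contra! h0
      exact hy (funext h0)
    refine ⟨x m / y m, funext fun k => ?_⟩
    simp only [Pi.smul_apply, smul_eq_mul]
    field_simp
    linear_combination h k m

theorem isClosed_setOf_exists_smul_eq {X ι K : Type*} [TopologicalSpace X] [Field K]
    [TopologicalSpace K] [ContinuousMul K] [T2Space K] {f g : X → ι → K}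
    (hf : Continuous f) (hg : Continuous g) (hg0 : ∀ x, g x ≠ 0) :
    IsClosed {x | ∃ c : K, f x = c • g x} := by
  simp only [exists_smul_eq_iff_mul_eq_mul (hg0 _), Set.ofPred_forall]
  exact isClosed_iInter fun k => isClosed_iInter fun m => isClosed_eq (by fun_prop) (by fun_prop)

section JordanBlock

variable {N : ℕ}

theorem JN_apply_zero (u : Fin N → ℂ) (h : 0 < N) : JN N u ⟨0, h⟩ = 0 := rfl

theorem JN_apply_succ (u : Fin N → ℂ) (k : ℕ) (hk : k + 1 < N) :
    JN N u ⟨k + 1, hk⟩ = u ⟨k, by omega⟩ := rfl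

theorem JN_eq_zero_iff {u : Fin N → ℂ} : JN N u = 0 ↔ ∀ k : Fin N, (k : ℕ) + 1 < N → u k = 0 := by
  constructor
  · rintro h ⟨k, _⟩ hk
    exact congrFun h ⟨k + 1, hk⟩
  · intro h
    funext ⟨k, hk⟩
    rcases k with _ | k
    · exact JN_apply_zero u hk
    · exact (JN_apply_succ u k hk).trans (h _ hk)

theorem JN_eN (k : Fin N) (hk : (k : ℕ) + 1 < N) : JN N (eN k) = eN ⟨k + 1, hk⟩ := by
  funext ⟨m, hm⟩
  rcases m with _ | m
  · simp [JN_apply_zero, eN, Fin.ext_iff]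
  · simp [JN_apply_succ, eN, Pi.single_apply, Fin.ext_iff]

end JordanBlock

section ClosedConditions

variable {n N : ℕ}

theorem isClosed_QGN : IsClosed (QGN n N) := by
  have hπ := IsOpenQuotientMap.piMap fun _ : ZMod n =>
    Projectivization.isOpenQuotientMap_mk_subtype (K := ℂ) (V := Fin N → ℂ)
  refine hπ.isQuotientMap.isClosed_preimage.1 ?_
  have hpre : (Pi.map fun _ v => Projectivization.mk ℂ v.1 v.2) ⁻¹' QGN n N =
      ⋂ i, {u : ZMod n → {v : Fin N → ℂ // v ≠ 0} | ∃ c : ℂ, JN N (u i).1 = c • (u (i + 1)).1} := by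
    ext u
    simp only [QGN, Set.mem_preimage, Pi.map_apply, Set.mem_iInter, Set.mem_ofPred_eq,
      Projectivization.map_submodule_mk_le_iff]
  rw [hpre]
  exact isClosed_iInter fun i => isClosed_setOf_exists_smul_eq
    ((JN N).continuous_of_finiteDimensional.comp (by fun_prop)) (by fun_prop) fun u => (u _).2

def vanishingBelow (k : Fin N) : Set (ℙ ℂ (Fin N → ℂ)) :=
  {x | ∀ c < k, x.rep c = 0}

theorem mk_mem_vanishingBelow_iff {k : Fin N} {u : Fin N → ℂ} (hu : u ≠ 0) :
    Projectivization.mk ℂ u hu ∈ vanishingBelow k ↔ ∀ c < k, u c = 0 := by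
  obtain ⟨γ, hγ⟩ := Projectivization.exists_smul_eq_mk_rep ℂ u hu
  simp [vanishingBelow, ← hγ, Units.smul_def]

theorem vanishingBelow_max (k l : Fin N) :
    vanishingBelow (max k l) = vanishingBelow k ∩ vanishingBelow l := by
  ext x
  simp only [vanishingBelow, Set.mem_ofPred_eq, Set.mem_inter_iff, lt_max_iff, or_imp,
    forall_and]

theorem isClosed_vanishingBelow (k : Fin N) : IsClosed (vanishingBelow k) := by
  refine (Projectivization.isOpenQuotientMap_mk_subtype (K := ℂ)).isQuotientMap
    |>.isClosed_preimage.1 ?_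
  simp only [Set.preimage, mk_mem_vanishingBelow_iff, Set.ofPred_forall]
  exact isClosed_iInter fun c => isClosed_iInter fun _ =>
    isClosed_eq ((continuous_apply c).comp continuous_subtype_val) continuous_const

theorem CbN_subset_vanishingBelow (k : Fin N) : CbN k ⊆ vanishingBelow k := by
  rintro _ ⟨u, hu, rfl, -, hvan⟩
  exact (mk_mem_vanishingBelow_iff hu).2 hvan

theorem closure_cellN_subset (a : ZMod n → Fin N) :
    closure (cellN n N a) ⊆ QGN n N ∩ Set.univ.pi fun i => vanishingBelow (a i) :=
  closure_minimal
    (Set.inter_subset_inter_right _ fun _ hL i _ => CbN_subset_vanishingBelow _ (hL i))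
    (isClosed_QGN.inter (isClosed_set_pi fun i _ => isClosed_vanishingBelow (a i)))

end ClosedConditions

section FixedPointIndex

variable {n N : ℕ}

def IsFixedPtIndexN (a : ZMod n → Fin N) : Prop :=
  ∀ i, (a i : ℕ) + 1 < N → (a (i + 1) : ℕ) = a i + 1

theorem IsFixedPtN.isFixedPtIndexN {p : ZMod n → ℙ ℂ (Fin N → ℂ)} {a : ZMod n → Fin N}
    (hp : IsFixedPtN n N p a) : IsFixedPtIndexN a := by
  intro i hi
  have hJ := hp.1 i
  rw [hp.2 i, hp.2 (i + 1), Projectivization.map_submodule_mk_le_iff, JN_eN _ hi] at hJ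
  obtain ⟨c, hc⟩ := hJ
  by_contra hne
  have := congrFun hc ⟨a i + 1, hi⟩
  simp [eN, Fin.ext_iff, Ne.symm hne] at this

theorem isFixedPtN_of_isFixedPtIndexN {a : ZMod n → Fin N} (ha : IsFixedPtIndexN a) :
    IsFixedPtN n N (fun i => Projectivization.mk ℂ (eN (a i)) (eN_ne_zero _)) a := by
  refine ⟨fun i => (Projectivization.map_submodule_mk_le_iff _ _ _).2 ?_, fun i => rfl⟩
  by_cases hi : (a i : ℕ) + 1 < N
  · refine ⟨1, ?_⟩
    rw [JN_eN _ hi, one_smul]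
    exact congrArg eN (Fin.ext (ha i hi).symm)
  · refine ⟨0, ?_⟩
    rw [zero_smul, JN_eq_zero_iff]
    intro k hk
    have hne : k ≠ a i := fun h => hi (h ▸ hk)
    simp [eN, hne]

theorem IsFixedPtIndexN.max {a b : ZMod n → Fin N} (ha : IsFixedPtIndexN a)
    (hb : IsFixedPtIndexN b) : IsFixedPtIndexN fun i => max (a i) (b i) := by
  intro i hi
  simp only [Fin.coe_max] at hi ⊢
  have := ha i
  have := hb i
  omega

theorem IsFixedPtIndexN.val_add {a : ZMod n → Fin N} (ha : IsFixedPtIndexN a) (i : ZMod n)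
    {t : ℕ} (ht : (a i : ℕ) + t < N) : (a (i + t) : ℕ) = a i + t := by
  induction t with
  | zero => simp
  | succ t ih =>
    rw [Nat.cast_succ, ← add_assoc, ha _ (by omega), ih (by omega), add_assoc]

theorem IsFixedPtIndexN.apply_add_eq_top [NeZero N] {a : ZMod n → Fin N}
    (ha : IsFixedPtIndexN a) (i : ZMod n) : a (i + (N - 1 - a i : ℕ)) = ⊤ := by
  have := (a i).isLt
  exact Fin.ext ((ha.val_add i (by omega)).trans (by rw [Fin.val_top]; omega))

theorem IsFixedPtIndexN.exists_apply_sub_eq_top [NeZero N] {a : ZMod n → Fin N}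
    (ha : IsFixedPtIndexN a) (i : ZMod n) : ∃ t : ℕ, a (i - (t + 1 : ℕ)) = ⊤ := by
  refine ⟨a (i - N), ?_⟩
  have := (a (i - N)).isLt
  convert ha.apply_add_eq_top (i - N) using 2
  rw [Nat.cast_sub (by omega), Nat.cast_sub (by omega)]
  push_cast
  ring

end FixedPointIndex

section ChainRep

variable {K V : Type*} [Field K] [AddCommGroup V] [Module K V] (f : V →ₗ[K] V) {n : ℕ}
  {r : ZMod n → V} (hbrk : ∀ i : ZMod n, ∃ t : ℕ, f (r (i - (t + 1 : ℕ))) = 0)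

open Classical in
/-- `i - chainStartDist f hbrk i` is the first index after the last `j < i` with `f (r j) = 0`. -/
noncomputable def chainStartDist (i : ZMod n) : ℕ := Nat.find (hbrk i)

noncomputable def chainRep (i : ZMod n) : V :=
  f^[chainStartDist f hbrk i] (r (i - chainStartDist f hbrk i))

variable {f hbrk}

open Classical in
theorem chainStartDist_spec (i : ZMod n) :
    f (r (i - (chainStartDist f hbrk i + 1 : ℕ))) = 0 :=
  Nat.find_spec (hbrk i)

open Classical in
theorem chainStartDist_min {i : ZMod n} {t : ℕ} (ht : t < chainStartDist f hbrk i) :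
    f (r (i - (t + 1 : ℕ))) ≠ 0 :=
  Nat.find_min (hbrk i) ht

open Classical in
theorem chainStartDist_succ_of_ne_zero {i : ZMod n} (h : f (r i) ≠ 0) :
    chainStartDist f hbrk (i + 1) = chainStartDist f hbrk i + 1 := by
  rw [chainStartDist, Nat.find_eq_iff]
  refine ⟨by simpa [add_sub_add_right_eq_sub] using chainStartDist_spec (hbrk := hbrk) i,
    fun t ht => ?_⟩
  rcases t with _ | t
  · simpa using h
  · simpa [add_sub_add_right_eq_sub] using chainStartDist_min (hbrk := hbrk) (by omega : t < _)

theorem chainRep_succ_of_ne_zero {i : ZMod n} (h : f (r i) ≠ 0) :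
    chainRep f hbrk (i + 1) = f (chainRep f hbrk i) := by
  rw [chainRep, chainRep, chainStartDist_succ_of_ne_zero h, Function.iterate_succ_apply']
  congr 3
  push_cast
  ring

theorem exists_chainRep_eq_smul (hr : ∀ i, ∃ c : K, f (r i) = c • r (i + 1)) (i : ZMod n) :
    ∃ c : K, c ≠ 0 ∧ chainRep f hbrk i = c • r i := by
  induction hd : chainStartDist f hbrk i generalizing i with
  | zero => exact ⟨1, one_ne_zero, by simp [chainRep, hd]⟩
  | succ d ih =>
    have hprev : f (r (i - 1)) ≠ 0 := by
      simpa using chainStartDist_min (hbrk := hbrk) (i := i) (t := 0) (by omega)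
    have hsucc := chainStartDist_succ_of_ne_zero (hbrk := hbrk) hprev
    have hrep := chainRep_succ_of_ne_zero (hbrk := hbrk) hprev
    obtain ⟨c', hc'⟩ := hr (i - 1)
    rw [sub_add_cancel] at hsucc hrep hc'
    obtain ⟨c, hc, hci⟩ := ih (i - 1) (by omega)
    have hc'0 : c' ≠ 0 := by rintro rfl; exact hprev (by simpa using hc')
    exact ⟨c * c', mul_ne_zero hc hc'0, by rw [hrep, hci, map_smul, hc', smul_smul]⟩

end ChainRep

section Deformation

variable {n N : ℕ} [NeZero N]

theorem apply_top_ne_zero {ι M : Type*} [PartialOrder ι] [OrderTop ι] [Zero M] {v : ι → M}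
    (hv : v ≠ 0) (h : ∀ c < ⊤, v c = 0) : v ⊤ ≠ 0 := by
  intro htop
  refine hv (funext fun c => ?_)
  rcases (le_top : c ≤ ⊤).lt_or_eq with hc | rfl
  exacts [h c hc, htop]

open Classical in
noncomputable def deformCoeff (u : ZMod n → Fin N → ℂ) (ε : ℂ) : ZMod n → ℕ → ℂ
  | i, 0 => u i ⊤
  | i, t + 1 => (if JN N (u i) = 0 then ε else 1) * deformCoeff u ε (i + 1) t

noncomputable def deform (u : ZMod n → Fin N → ℂ) (a : ZMod n → Fin N) (ε : ℂ) (i : ZMod n) :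
    Fin N → ℂ :=
  fun k => if a i ≤ k then deformCoeff u ε i (N - 1 - k) else 0

variable {u : ZMod n → Fin N → ℂ} {a : ZMod n → Fin N}

theorem deformCoeff_zero (hu : ∀ i, JN N (u i) ≠ 0 → u (i + 1) = JN N (u i)) (i : ZMod n)
    (k : Fin N) : deformCoeff u 0 i (N - 1 - k) = u i k := by
  induction ht : N - 1 - (k : ℕ) generalizing i k with
  | zero =>
    rw [deformCoeff]
    exact congrArg (u i) (Fin.ext (by rw [Fin.val_top N]; omega))
  | succ t ih =>
    have hk : (k : ℕ) + 1 < N := by omega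
    by_cases hJ : JN N (u i) = 0
    · simp [deformCoeff, hJ, JN_eq_zero_iff.1 hJ k hk]
    · rw [deformCoeff, if_neg hJ, one_mul, ih (i + 1) ⟨k + 1, hk⟩ (by show N - 1 - (k + 1) = t; omega), hu i hJ]
      rfl

theorem deform_zero (hu : ∀ i, JN N (u i) ≠ 0 → u (i + 1) = JN N (u i))
    (hvan : ∀ i, ∀ c < a i, u i c = 0) (i : ZMod n) : deform u a 0 i = u i := by
  funext k
  rw [deform]
  split_ifs with hk
  exacts [deformCoeff_zero hu i k, (hvan i k (not_le.1 hk)).symm]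

theorem continuous_deformCoeff (i : ZMod n) (t : ℕ) : Continuous fun ε => deformCoeff u ε i t := by
  induction t generalizing i with
  | zero => exact continuous_const
  | succ t ih =>
    exact (continuous_if_const _ (fun _ => continuous_id) fun _ => continuous_const).mul (ih _)

theorem continuous_deform (i : ZMod n) : Continuous fun ε => deform u a ε i :=
  continuous_pi fun _ => continuous_if_const _ (fun _ => continuous_deformCoeff _ _)
    fun _ => continuous_const

theorem deformCoeff_ne_zero {ε : ℂ} (hε : ε ≠ 0) {i : ZMod n} {t : ℕ} (h : u (i + t) ⊤ ≠ 0) :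
    deformCoeff u ε i t ≠ 0 := by
  induction t generalizing i with
  | zero => simpa [deformCoeff] using h
  | succ t ih =>
    refine mul_ne_zero (by split_ifs <;> simp [hε]) (ih ?_)
    rwa [add_assoc, add_comm 1, ← Nat.cast_succ]

theorem JN_deform (ha : IsFixedPtIndexN a) (ε : ℂ) (i : ZMod n) :
    ∃ c : ℂ, JN N (deform u a ε i) = c • deform u a ε (i + 1) := by
  by_cases hi : (a i : ℕ) + 1 < N
  · have hai := ha i hi
    refine ⟨if JN N (u i) = 0 then ε else 1, funext fun k => ?_⟩
    obtain ⟨_ | k, hk⟩ := k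
    · have h0 : ¬a (i + 1) ≤ ⟨0, hk⟩ := by rw [Fin.le_def]; simp [hai]
      rw [JN_apply_zero, Pi.smul_apply, deform, if_neg h0, smul_zero]
    · rw [JN_apply_succ, Pi.smul_apply, smul_eq_mul, deform, deform]
      simp only [Fin.le_def, hai, Nat.add_le_add_iff_right]
      rw [show N - 1 - k = N - 1 - (k + 1) + 1 by omega, deformCoeff, mul_ite, mul_zero]
  · refine ⟨0, ?_⟩
    rw [zero_smul, JN_eq_zero_iff]
    intro k hk
    exact if_neg (by rw [Fin.le_def]; omega)

theorem deform_apply_self_ne_zero (ha : IsFixedPtIndexN a) (hu0 : ∀ i, u i ≠ 0)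
    (hvan : ∀ i, ∀ c < a i, u i c = 0) {ε : ℂ} (hε : ε ≠ 0) (i : ZMod n) :
    deform u a ε i (a i) ≠ 0 := by
  rw [deform, if_pos le_rfl]
  refine deformCoeff_ne_zero hε (apply_top_ne_zero (hu0 _) fun c hc => hvan _ c ?_)
  rwa [ha.apply_add_eq_top]

theorem deform_ne_zero (ha : IsFixedPtIndexN a) (hu0 : ∀ i, u i ≠ 0)
    (hu : ∀ i, JN N (u i) ≠ 0 → u (i + 1) = JN N (u i)) (hvan : ∀ i, ∀ c < a i, u i c = 0)
    (ε : ℂ) (i : ZMod n) : deform u a ε i ≠ 0 := by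
  rcases eq_or_ne ε 0 with rfl | hε
  · rw [deform_zero hu hvan]
    exact hu0 i
  · exact fun h => deform_apply_self_ne_zero ha hu0 hvan hε i (by rw [h]; rfl)

theorem mk_mem_closure_cellN (ha : IsFixedPtIndexN a) (hu0 : ∀ i, u i ≠ 0)
    (hu : ∀ i, JN N (u i) ≠ 0 → u (i + 1) = JN N (u i)) (hvan : ∀ i, ∀ c < a i, u i c = 0) :
    (fun i => Projectivization.mk ℂ (u i) (hu0 i)) ∈ closure (cellN n N a) := by
  let γ : ℂ → ZMod n → ℙ ℂ (Fin N → ℂ) := fun ε i =>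
    Projectivization.mk ℂ (deform u a ε i) (deform_ne_zero ha hu0 hu hvan ε i)
  have hγ0 : γ 0 = fun i => Projectivization.mk ℂ (u i) (hu0 i) :=
    funext fun i => (Projectivization.mk_eq_mk_iff ℂ _ _ _ _).2 ⟨1, by simp [deform_zero hu hvan]⟩
  have hγ : Continuous γ := continuous_pi fun i =>
    Projectivization.continuous_mk_subtype.comp
      ((continuous_deform i).subtype_mk fun ε => deform_ne_zero ha hu0 hu hvan ε i)
  have hcell : ∀ ε ≠ 0, γ ε ∈ cellN n N a := fun ε hε =>
    ⟨fun i => (Projectivization.map_submodule_mk_le_iff _ _ _).2 (JN_deform ha ε i),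
      fun i => ⟨_, _, rfl, deform_apply_self_ne_zero ha hu0 hvan hε i,
        fun c hc => if_neg (not_le.2 hc)⟩⟩
  rw [← hγ0]
  exact mem_closure_of_tendsto (b := 𝓝[≠] (0 : ℂ)) ((hγ.tendsto 0).mono_left nhdsWithin_le_nhds)
    (eventually_mem_nhdsWithin.mono hcell)

end Deformation

section ClosureOfCell

variable {n N : ℕ} {a : ZMod n → Fin N}

theorem subset_closure_cellN (ha : IsFixedPtIndexN a) :
    QGN n N ∩ Set.univ.pi (fun i => vanishingBelow (a i)) ⊆ closure (cellN n N a) := by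
  have : NeZero N := ⟨(a 0).pos.ne'⟩
  rintro L ⟨hL, hLvan⟩
  obtain ⟨r, hr0, rfl⟩ : ∃ (r : ZMod n → Fin N → ℂ) (hr0 : ∀ i, r i ≠ 0),
      L = fun i => Projectivization.mk ℂ (r i) (hr0 i) :=
    ⟨fun i => (L i).rep, fun i => (L i).rep_nonzero, funext fun i => (L i).mk_rep.symm⟩
  have hr i := (Projectivization.map_submodule_mk_le_iff _ _ _).1 (hL i)
  have hvan i := (mk_mem_vanishingBelow_iff _).1 (hLvan i trivial)
  have hbrk (i : ZMod n) : ∃ t : ℕ, JN N (r (i - (t + 1 : ℕ))) = 0 := by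
    obtain ⟨t, ht⟩ := ha.exists_apply_sub_eq_top i
    exact ⟨t, JN_eq_zero_iff.2 fun k hk => hvan _ k (by rw [ht, Fin.lt_def, Fin.val_top]; omega)⟩
  choose c hc0 hcu using exists_chainRep_eq_smul (hbrk := hbrk) hr
  have hu0 i : chainRep (JN N) hbrk i ≠ 0 := by rw [hcu]; exact smul_ne_zero (hc0 i) (hr0 i)
  have hmk i : Projectivization.mk ℂ _ (hu0 i) = Projectivization.mk ℂ (r i) (hr0 i) :=
    (Projectivization.mk_eq_mk_iff ℂ _ _ _ _).2 ⟨Units.mk0 (c i) (hc0 i), (hcu i).symm⟩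
  have hchain i (hJ : JN N (chainRep (JN N) hbrk i) ≠ 0) :
      chainRep (JN N) hbrk (i + 1) = JN N (chainRep (JN N) hbrk i) :=
    chainRep_succ_of_ne_zero fun h => hJ (by rw [hcu, map_smul, h, smul_zero])
  have huvan i : ∀ k < a i, chainRep (JN N) hbrk i k = 0 := fun k hk => by
    simp [hcu, hvan i k hk]
  simpa only [hmk] using mk_mem_closure_cellN ha hu0 hchain huvan

theorem closure_cellN (ha : IsFixedPtIndexN a) :
    closure (cellN n N a) = QGN n N ∩ Set.univ.pi fun i => vanishingBelow (a i) :=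
  (closure_cellN_subset a).antisymm (subset_closure_cellN ha)

end ClosureOfCell

theorem statement_14_general (n N : ℕ)
    (p q : ZMod n → ℙ ℂ (Fin N → ℂ)) (a b : ZMod n → Fin N)
    (hp : IsFixedPtN n N p a) (hq : IsFixedPtN n N q b) :
    IsFixedPtN n N
      (fun i => Projectivization.mk ℂ (eN (max (a i) (b i))) (eN_ne_zero _))
      (fun i => max (a i) (b i)) ∧
    {i : ZMod n | ((max (a i) (b i) : Fin N) : ℕ) = N - 1} =
      {i : ZMod n | (a i : ℕ) = N - 1} ∪ {i : ZMod n | (b i : ℕ) = N - 1} ∧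
    closure (cellN n N a) ∩ closure (cellN n N b) =
      closure (cellN n N (fun i => max (a i) (b i))) := by
  have ha := hp.isFixedPtIndexN
  have hb := hq.isFixedPtIndexN
  refine ⟨isFixedPtN_of_isFixedPtIndexN (ha.max hb), ?_, ?_⟩
  · ext i
    have := (a i).isLt
    have := (b i).isLt
    simp only [Set.mem_ofPred_eq, Set.mem_union, Fin.coe_max]
    omega
  · rw [closure_cellN ha, closure_cellN hb, closure_cellN (ha.max hb)]
    simp only [vanishingBelow_max, Set.pi_inter_distrib]
    exact (Set.inter_inter_distrib_left _ _ _).symm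

theorem statement_14 (n N : ℕ) (hn : 1 ≤ n) (hN : 1 ≤ N)
    (p q : ZMod n → ℙ ℂ (Fin N → ℂ)) (a b : ZMod n → Fin N)
    (hp : IsFixedPtN n N p a) (hq : IsFixedPtN n N q b) :
    IsFixedPtN n N
      (fun i => Projectivization.mk ℂ (eN (max (a i) (b i))) (eN_ne_zero _))
      (fun i => max (a i) (b i)) ∧
    {i : ZMod n | ((max (a i) (b i) : Fin N) : ℕ) = N - 1} =
      {i : ZMod n | (a i : ℕ) = N - 1} ∪ {i : ZMod n | (b i : ℕ) = N - 1} ∧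
    closure (cellN n N a) ∩ closure (cellN n N b) =
      closure (cellN n N (fun i => max (a i) (b i))) :=
  statement_14_general n N p q a b hp hq
end

section
/- Let p, q be fixed points of X with index functions f_p, f_q such that f_p(i) ≤ f_q(i) for all i ∈ ℤ/nℤ, and suppose the tuple p+q (defined by (p+q)_i = ℂ(e_{f_p(i)} + e_{f_q(i)})) lies in X. Then lim_{λ→0} λ•(p+q) = p and lim_{λ→0} λ^{−1}•(p+q) = q (limits in ℙ(V)^{ℤ/nℤ} for the diagonal ℂ^×-action). -/
/-!
Each coordinate of `p+q` is `[e_b + e_c]` with `b ≤ c`. The weight `wt` is strictly increasing for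
the order on `B`, so `λ • [e_b + e_c] = [e_b + λ ^ (wt c - wt b) e_c]`, which tends to `[e_b]` as
`λ → 0`; for `λ⁻¹` the weights change sign and the limit is `[e_c]`.
-/

open LinearAlgebra.Projectivization Projectivization Filter Topology

noncomputable section

variable {M : ℕ}

/-- The index set `B`: `⟨l, i⟩` encodes the basis vector `v_{i+1}^{l+1}` of the
`(l+1)`-st Jordan block (both indices are 0-based here, 1-based in the paper). -/
abbrev Idx (j : Fin M → ℕ) : Type := Σ l : Fin M, Fin (j l)

variable {j : Fin M → ℕ}

/-- `j_l − i` in the 1-based notation of the paper: the distance from the end of the block. -/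
def col (b : Idx j) : ℕ := j b.1 - 1 - b.2.val

/-- The twisted lexicographic order on `B`:
`b < c` iff `col c < col b`, or `col b = col c` and the block of `b` is earlier. -/
def blt (b c : Idx j) : Prop := col c < col b ∨ (col b = col c ∧ b.1 < c.1)

/-- `b ≤ c` for the twisted lexicographic order. -/
def ble (b c : Idx j) : Prop := blt b c ∨ b = c

/-- The underlying vector space `V = ℂ^B`. -/
abbrev Vsp (j : Fin M → ℕ) : Type := Idx j → ℂ

/-- The standard basis vector `e_b`. -/
def eVec (b : Idx j) : Vsp j := Pi.single b 1

lemma eVec_ne_zero (b : Idx j) : eVec b ≠ 0 := by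
  intro h
  have := congrFun h b
  simp [eVec] at this

/-- The nilpotent Jordan map `J` with `J e_{(l,i)} = e_{(l,i+1)}`. -/
def Jmap (j : Fin M → ℕ) : Vsp j →ₗ[ℂ] Vsp j where
  toFun u c :=
    if h : 0 < c.2.val then
      u ⟨c.1, ⟨c.2.val - 1, lt_of_le_of_lt (Nat.sub_le _ _) c.2.isLt⟩⟩ else 0
  map_add' u v := by funext c; by_cases h : 0 < c.2.val <;> simp [h]
  map_smul' a u := by funext c; by_cases h : 0 < c.2.val <;> simp [h]

/-- The quiver Grassmannian `X ⊆ ℙ(V)^{ℤ/nℤ}` of one-dimensional subrepresentations. -/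
def QG (n : ℕ) (j : Fin M → ℕ) : Set (ZMod n → ℙ ℂ (Vsp j)) :=
  {L | ∀ i : ZMod n, (L i).submodule.map (Jmap j) ≤ (L (i + 1)).submodule}

/-- `p` is a fixed point of `X` with index function `f`. -/
def IsFixedPt (n : ℕ) (L : ZMod n → ℙ ℂ (Vsp j)) (f : ZMod n → Idx j) : Prop :=
  L ∈ QG n j ∧ ∀ i, L i = mk ℂ (eVec (f i)) (eVec_ne_zero (f i))

/-- The cell `C_b ⊆ ℙ(V)`. -/
def Cb (b : Idx j) : Set (ℙ ℂ (Vsp j)) :=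
  {x | ∃ (u : Vsp j) (hu : u ≠ 0), x = mk ℂ u hu ∧ u b ≠ 0 ∧ ∀ c, blt c b → u c = 0}

/-- The closed cell `Z_b ⊆ ℙ(V)`. -/
def Zb (b : Idx j) : Set (ℙ ℂ (Vsp j)) :=
  {x | ∃ (u : Vsp j) (hu : u ≠ 0), x = mk ℂ u hu ∧ ∀ c, blt c b → u c = 0}

/-- The BB-cell of the fixed point with index function `f`. -/
def cell (n : ℕ) (f : ZMod n → Idx j) : Set (ZMod n → ℙ ℂ (Vsp j)) :=
  QG n j ∩ {L | ∀ i, L i ∈ Cb (f i)}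

/-- Rescaling of coordinates by units, as a linear map. -/
def scaleV (c : Idx j → ℂˣ) : Vsp j →ₗ[ℂ] Vsp j where
  toFun u b := c b * u b
  map_add' u v := by funext b; simp [mul_add]
  map_smul' a u := by funext b; simp [smul_eq_mul]; ring

lemma scaleV_injective (c : Idx j → ℂˣ) : Function.Injective (scaleV c) := by
  intro u v h
  funext b
  have hb : (c b : ℂ) * u b = (c b : ℂ) * v b := congrFun h b
  exact mul_left_cancel₀ (Units.ne_zero (c b)) hb

/-- The weight of the `ℂ^×`-action on the coordinate `b`: `l − M(j_l − i)`. -/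
def wt (M : ℕ) {j : Fin M → ℕ} (b : Idx j) : ℤ := (b.1.val + 1 : ℤ) - M * col b

/-- The `ℂ^×`-action on `ℙ(V)`: `λ • e_b = λ^{wt b} e_b`. -/
def actP (lam : ℂˣ) : ℙ ℂ (Vsp j) → ℙ ℂ (Vsp j) :=
  Projectivization.map (scaleV fun b => lam ^ wt M b) (scaleV_injective _)

/-- The punctured-neighborhood filter of `0` in `ℂ`, pulled back to `ℂˣ`. -/
def zeroF : Filter ℂˣ := comap Units.val (𝓝 (0 : ℂ))

end
lemma eVec_add_ne_zero {M : ℕ} {j : Fin M → ℕ} (b c : Idx j) : eVec b + eVec c ≠ 0 := by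
  intro h
  have h2 := congrFun h c
  simp [eVec, Pi.single_apply] at h2
  split_ifs at h2 <;> norm_num at h2

/-- The point `p+q`, given by `(p+q)_i = ℂ(e_{f_p(i)} + e_{f_q(i)})`. -/
noncomputable def pqPt {M : ℕ} {j : Fin M → ℕ} (n : ℕ) (fp fq : ZMod n → Idx j) :
    ZMod n → ℙ ℂ (Vsp j) :=
  fun i => Projectivization.mk ℂ (eVec (fp i) + eVec (fq i)) (eVec_add_ne_zero _ _)

namespace Projectivization

variable {K V α : Type*} [DivisionRing K] [AddCommGroup V] [Module K V] [TopologicalSpace V]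

theorem tendsto_mk {l : Filter α} {u : α → V} {v : V} (hu : ∀ a, u a ≠ 0) (hv : v ≠ 0)
    (h : Tendsto u l (𝓝 v)) :
    Tendsto (fun a => mk K (u a) (hu a)) l (𝓝 (mk K v hv)) :=
  (continuous_quot_mk.tendsto (⟨v, hv⟩ : {w : V // w ≠ 0})).comp (tendsto_subtype_rng.mpr h)

end Projectivization

theorem tendsto_zpow_zeroF {d : ℤ} (hd : 0 < d) :
    Tendsto (fun lam : ℂˣ => (lam : ℂ) ^ d) zeroF (𝓝 0) := by
  lift d to ℕ using hd.le
  simpa [zeroF, zero_pow (Nat.cast_pos.mp hd).ne'] using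
    (tendsto_comap : Tendsto ((↑) : ℂˣ → ℂ) zeroF (𝓝 0)).pow d

section
variable {M : ℕ} {j : Fin M → ℕ}

noncomputable def weightAction (w : Idx j → ℤ) (lam : ℂˣ) : ℙ ℂ (Vsp j) → ℙ ℂ (Vsp j) :=
  Projectivization.map (scaleV fun b => lam ^ w b) (scaleV_injective _)

theorem actP_eq_weightAction (lam : ℂˣ) : actP (j := j) lam = weightAction (wt M) lam := rfl

theorem actP_inv_eq_weightAction (lam : ℂˣ) :
    actP (j := j) lam⁻¹ = weightAction (-wt M) lam := by
  unfold actP weightAction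
  congr 2
  exact funext fun b => inv_zpow' lam _

theorem weightAction_mk (w : Idx j → ℤ) (lam : ℂˣ) {v : Vsp j} (hv : v ≠ 0) {b : Idx j}
    (hb : v b ≠ 0) :
    weightAction w lam (mk ℂ v hv) =
      mk ℂ (fun c => (lam : ℂ) ^ (w c - w b) * v c)
        (fun h => hb (by simpa using congrFun h b)) := by
  refine (mk_eq_mk_iff' ℂ _ _ _ _).mpr ⟨(lam : ℂ) ^ w b, funext fun c => ?_⟩
  simp only [scaleV, LinearMap.coe_mk, AddHom.coe_mk, Pi.smul_apply, smul_eq_mul,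
    Units.val_zpow_eq_zpow_val]
  rw [← mul_assoc, ← zpow_add₀ lam.ne_zero, add_sub_cancel]

/-- After normalizing the coordinate `b`, every other coordinate in the support of `v` carries a
positive power of `λ`. -/
theorem tendsto_weightAction_mk {w : Idx j → ℤ} {v : Vsp j} (hv : v ≠ 0) {b : Idx j}
    (hb : v b ≠ 0) (hmin : ∀ c ≠ b, v c ≠ 0 → w b < w c) :
    Tendsto (fun lam => weightAction w lam (mk ℂ v hv)) zeroF
      (𝓝 (mk ℂ (eVec b) (eVec_ne_zero b))) := by
  have hlim : mk ℂ (eVec b) (eVec_ne_zero b) =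
      mk ℂ (v b • eVec b) (smul_ne_zero hb (eVec_ne_zero b)) :=
    ((mk_eq_mk_iff' ℂ _ _ _ _).mpr ⟨v b, rfl⟩).symm
  simp only [weightAction_mk w _ hv hb, hlim]
  refine Projectivization.tendsto_mk _ _ (tendsto_pi_nhds.mpr fun c => ?_)
  by_cases hcb : c = b
  · subst hcb
    simpa [eVec] using tendsto_const_nhds
  have hzero : (v b • eVec b) c = 0 := by simp [eVec, hcb]
  rw [hzero]
  by_cases hc : v c = 0
  · simpa [hc] using tendsto_const_nhds
  · simpa using (tendsto_zpow_zeroF (sub_pos.mpr (hmin c hcb hc))).mul_const (v c)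

/-- Since `l + 1 ≤ M`, a step in the column outweighs any change of block. -/
theorem wt_lt_wt_of_blt {b c : Idx j} (h : blt b c) : wt M b < wt M c := by
  have hb : (b.1.val : ℤ) + 1 ≤ M := by exact_mod_cast b.1.isLt
  unfold wt
  rcases h with h | ⟨hcol, hblock⟩
  · have : (M : ℤ) * (col c + 1) ≤ M * col b := by exact_mod_cast Nat.mul_le_mul_left M h
    linarith
  · rw [hcol]
    have : (b.1.val : ℤ) < c.1.val := by exact_mod_cast hblock
    linarith

theorem eVec_add_eVec_apply_left (b c : Idx j) : (eVec b + eVec c) b ≠ 0 := by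
  by_cases h : c = b <;> simp [eVec, h]

theorem eVec_add_eVec_apply_right (b c : Idx j) : (eVec b + eVec c) c ≠ 0 := by
  rw [add_comm]
  exact eVec_add_eVec_apply_left c b

theorem eq_or_eq_of_eVec_add_eVec_apply_ne_zero {a b c : Idx j}
    (h : (eVec b + eVec c) a ≠ 0) : a = b ∨ a = c := by
  by_contra! hne
  simp [eVec, hne.1, hne.2] at h

theorem tendsto_actP_mk_add_left {b c : Idx j} (hbc : ble b c) :
    Tendsto (fun lam => actP lam (mk ℂ (eVec b + eVec c) (eVec_add_ne_zero b c))) zeroF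
      (𝓝 (mk ℂ (eVec b) (eVec_ne_zero b))) := by
  simp only [actP_eq_weightAction]
  refine tendsto_weightAction_mk _ (eVec_add_eVec_apply_left b c) fun a hab ha => ?_
  obtain rfl : a = c := (eq_or_eq_of_eVec_add_eVec_apply_ne_zero ha).resolve_left hab
  rcases hbc with hlt | rfl
  · exact wt_lt_wt_of_blt hlt
  · exact absurd rfl hab

theorem tendsto_actP_inv_mk_add_right {b c : Idx j} (hbc : ble b c) :
    Tendsto (fun lam => actP lam⁻¹ (mk ℂ (eVec b + eVec c) (eVec_add_ne_zero b c))) zeroF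
      (𝓝 (mk ℂ (eVec c) (eVec_ne_zero c))) := by
  simp only [actP_inv_eq_weightAction]
  refine tendsto_weightAction_mk _ (eVec_add_eVec_apply_right b c) fun a hac ha => ?_
  obtain rfl : a = b := (eq_or_eq_of_eVec_add_eVec_apply_ne_zero ha).resolve_right hac
  rcases hbc with hlt | rfl
  · exact neg_lt_neg (wt_lt_wt_of_blt hlt)
  · exact absurd rfl hac

end

theorem statement_15_general (n M : ℕ) (j : Fin M → ℕ)
    (p q : ZMod n → ℙ ℂ (Vsp j)) (fp fq : ZMod n → Idx j)
    (hp : IsFixedPt n p fp) (hq : IsFixedPt n q fq)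
    (hle : ∀ i : ZMod n, ble (fp i) (fq i)) :
    Filter.Tendsto (fun lam : ℂˣ => fun i => actP lam (pqPt n fp fq i)) zeroF (𝓝 p) ∧
    Filter.Tendsto (fun lam : ℂˣ => fun i => actP lam⁻¹ (pqPt n fp fq i)) zeroF (𝓝 q) := by
  refine ⟨tendsto_pi_nhds.mpr fun i => ?_, tendsto_pi_nhds.mpr fun i => ?_⟩
  · rw [hp.2 i]
    exact tendsto_actP_mk_add_left (hle i)
  · rw [hq.2 i]
    exact tendsto_actP_inv_mk_add_right (hle i)

theorem statement_15 (n M : ℕ) (hn : 1 ≤ n) (hM : 1 ≤ M) (j : Fin M → ℕ)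
    (hpart : Antitone j) (hj : ∀ l, 1 ≤ j l)
    (p q : ZMod n → ℙ ℂ (Vsp j)) (fp fq : ZMod n → Idx j)
    (hp : IsFixedPt n p fp) (hq : IsFixedPt n q fq)
    (hle : ∀ i : ZMod n, ble (fp i) (fq i))
    (hX : pqPt n fp fq ∈ QG n j) :
    Filter.Tendsto (fun lam : ℂˣ => fun i => actP lam (pqPt n fp fq i)) zeroF (𝓝 p) ∧
    Filter.Tendsto (fun lam : ℂˣ => fun i => actP lam⁻¹ (pqPt n fp fq i)) zeroF (𝓝 q) :=
  statement_15_general n M j p q fp fq hp hq hle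
end
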